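/- arXiv:1305.6573 — 2 statements merged into one kernel-verified Lean document; each statement's English description precedes it below -/
import Mathlib

section
/- Let G be a group, H ≤ G, and α : A → G a homomorphism. Let C = C_G(im α) be the centralizer of the image of α in G, acting on the fixed-point set (G/H)^{im α} by left multiplication. Then there is a bijection between the orbit set (G/H)^{im α}/C and the set of H-conjugacy classes [β] of homomorphisms β : A → H such that β composed with the inclusion H ↪ G is G-conjugate to α. The bijection sends the orbit of gH to the conjugacy class of g⁻¹αg. -/
/-!
Both sides are quotients of the set `S` of those `g : G` with `g⁻¹ (im α) g ⊆ H`: a fixed coset is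
`gH` with `g ∈ S`, and a homomorphism `β` as in the statement is `g⁻¹ α g` with `g ∈ S`. In both
quotients, `g` and `g'` are identified exactly when `g'` lies in the double coset `C g H`, where
`C` is the centralizer of `im α`; for conjugacy classes this is because `g⁻¹ α g = g'⁻¹ α g'` iff
`g' g⁻¹ ∈ C`. Hence both orbit sets are `C \ S / H`.
-/
section
variable {G A : Type*} [Group G] [Group A] (H : Subgroup G) (α : A →* G)

/-- Relation identifying two fixed cosets in the same orbit of the centralizer of `im α`. -/
def centralizerOrbitRel :
    {x : G ⧸ H // ∀ a : A, (α a) • x = x} → {x : G ⧸ H // ∀ a : A, (α a) • x = x} → Prop :=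
  fun x y => ∃ c ∈ Subgroup.centralizer (Set.range α), c • (x : G ⧸ H) = (y : G ⧸ H)

/-- Relation identifying two homomorphisms `A →* H` (whose composite with the inclusion is
conjugate to `α`) that are conjugate by an element of `H`. -/
def hConjRel :
    {β : A →* H // ∃ g : G, ∀ a : A, (β a : G) = g⁻¹ * α a * g} →
    {β : A →* H // ∃ g : G, ∀ a : A, (β a : G) = g⁻¹ * α a * g} → Prop :=
  fun β β' => ∃ h : H, ∀ a : A, (β' : A →* H) a = h⁻¹ * (β : A →* H) a * h

open DoubleCoset

theorem exists_equiv_apply_eq_of_surjective_of_fibers_eq {S X Y : Type*} {f : S → X} {g : S → Y}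
    (hf : f.Surjective) (hg : g.Surjective) (hfg : ∀ s t, f s = f t ↔ g s = g t) :
    ∃ e : X ≃ Y, ∀ s, e (f s) = g s :=
  ⟨(Setoid.quotientKerEquivOfSurjective f hf).symm.trans
      ((Quotient.congrRight hfg).trans (Setoid.quotientKerEquivOfSurjective g hg)),
    fun s => by
      have hs : (Setoid.quotientKerEquivOfSurjective f hf).symm (f s) = Quotient.mk _ s :=
        (Equiv.symm_apply_eq _).mpr rfl
      rw [Equiv.trans_apply, Equiv.trans_apply, hs]
      rfl⟩

theorem smul_mk_eq_mk_iff_conj_mem (x g : G) :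
    x • (QuotientGroup.mk g : G ⧸ H) = QuotientGroup.mk g ↔ g⁻¹ * x * g ∈ H := by
  rw [MulAction.Quotient.smul_mk, QuotientGroup.eq, ← H.inv_mem_iff, smul_eq_mul]
  congr! 1
  group

theorem exists_smul_mk_eq_mk_iff_mem_doubleCoset (K : Subgroup G) (a b : G) :
    (∃ c ∈ K, c • (QuotientGroup.mk a : G ⧸ H) = QuotientGroup.mk b) ↔
      b ∈ doubleCoset a K H := by
  simp only [mem_doubleCoset, MulAction.Quotient.smul_mk, QuotientGroup.eq, smul_eq_mul]
  constructor
  · rintro ⟨c, hc, hcab⟩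
    exact ⟨c, hc, _, hcab, by group⟩
  · rintro ⟨c, hc, h, hh, rfl⟩
    exact ⟨c, hc, by simpa [mul_assoc] using hh⟩

theorem conj_eq_conj_iff_mul_inv_mem_centralizer {T : Set G} {a b : G} :
    (∀ t ∈ T, b⁻¹ * t * b = a⁻¹ * t * a) ↔ b * a⁻¹ ∈ Subgroup.centralizer T := by
  simp only [Subgroup.mem_centralizer_iff]
  refine forall₂_congr fun t _ => ⟨fun h => ?_, fun h => ?_⟩
  · calc t * (b * a⁻¹) = b * (b⁻¹ * t * b) * a⁻¹ := by group
      _ = b * a⁻¹ * t := by rw [h]; group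
  · calc b⁻¹ * t * b = b⁻¹ * (t * (b * a⁻¹)) * a := by group
      _ = a⁻¹ * t * a := by rw [h]; group

def conjCodRestrict (g : G) (hg : ∀ a, g⁻¹ * α a * g ∈ H) : A →* H where
  toFun a := ⟨g⁻¹ * α a * g, hg a⟩
  map_one' := by ext; simp
  map_mul' a b := by ext; simp [mul_assoc]

@[simp]
theorem coe_conjCodRestrict_apply (g : G) (hg : ∀ a, g⁻¹ * α a * g ∈ H) (a : A) :
    (conjCodRestrict H α g hg a : G) = g⁻¹ * α a * g :=
  rfl

theorem eq_conjCodRestrict {g : G} (hg : ∀ a, g⁻¹ * α a * g ∈ H) (β : A →* H)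
    (hβ : ∀ a, (β a : G) = g⁻¹ * α a * g) : β = conjCodRestrict H α g hg :=
  MonoidHom.ext fun a => Subtype.ext (hβ a)

theorem centralizerOrbitRel_equivalence : Equivalence (centralizerOrbitRel H α) where
  refl _ := ⟨1, one_mem _, one_smul _ _⟩
  symm := fun ⟨c, hc, hxy⟩ => ⟨c⁻¹, inv_mem hc, by rw [← hxy, inv_smul_smul]⟩
  trans := fun ⟨c, hc, hxy⟩ ⟨d, hd, hyz⟩ => ⟨d * c, mul_mem hd hc, by rw [mul_smul, hxy, hyz]⟩

theorem hConjRel_equivalence : Equivalence (hConjRel H α) where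
  refl _ := ⟨1, fun _ => by simp⟩
  symm := fun ⟨h, hβ⟩ => ⟨h⁻¹, fun a => by rw [hβ a]; group⟩
  trans := fun ⟨h, hβ⟩ ⟨k, hγ⟩ => ⟨h * k, fun a => by rw [hγ a, hβ a]; group⟩

theorem centralizerOrbitRel_mk_iff {a b : G}
    (ha : ∀ x, α x • (QuotientGroup.mk a : G ⧸ H) = QuotientGroup.mk a)
    (hb : ∀ x, α x • (QuotientGroup.mk b : G ⧸ H) = QuotientGroup.mk b) :
    centralizerOrbitRel H α ⟨_, ha⟩ ⟨_, hb⟩ ↔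
      b ∈ doubleCoset a (Subgroup.centralizer (Set.range α)) H :=
  exists_smul_mk_eq_mk_iff_mem_doubleCoset H _ a b

theorem hConjRel_conjCodRestrict_iff {a b : G} (ha : ∀ x, a⁻¹ * α x * a ∈ H)
    (hb : ∀ x, b⁻¹ * α x * b ∈ H) :
    hConjRel H α ⟨conjCodRestrict H α a ha, a, fun _ => rfl⟩
        ⟨conjCodRestrict H α b hb, b, fun _ => rfl⟩ ↔
      b ∈ doubleCoset a (Subgroup.centralizer (Set.range α)) H := by
  have conj_iff : ∀ h : H, (∀ x, conjCodRestrict H α b hb x =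
      h⁻¹ * conjCodRestrict H α a ha x * h) ↔
        b * (a * h)⁻¹ ∈ Subgroup.centralizer (Set.range α) := fun h => by
    rw [← conj_eq_conj_iff_mul_inv_mem_centralizer, Set.forall_mem_range]
    refine forall_congr' fun x => ?_
    simp [Subtype.ext_iff, mul_assoc]
  simp only [hConjRel, conj_iff, mem_doubleCoset]
  constructor
  · rintro ⟨h, hc⟩
    exact ⟨_, hc, h, h.2, by group⟩
  · rintro ⟨c, hc, h, hh, rfl⟩
    exact ⟨⟨h, hh⟩, by simpa [mul_assoc] using hc⟩

theorem orbits_of_fixed_cosets_equiv_conjugacy_classes :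
    ∃ e : Quot (centralizerOrbitRel H α) ≃ Quot (hConjRel H α),
      ∀ (g : G) (hg : ∀ a : A, (α a) • (QuotientGroup.mk g : G ⧸ H) = QuotientGroup.mk g)
        (β : A →* H) (hβ : ∀ a : A, (β a : G) = g⁻¹ * α a * g),
        e (Quot.mk _ ⟨QuotientGroup.mk g, hg⟩) = Quot.mk _ ⟨β, g, hβ⟩ := by
  let S := {g : G // ∀ a, g⁻¹ * α a * g ∈ H}
  let orbit (g : S) : Quot (centralizerOrbitRel H α) :=
    Quot.mk _ ⟨QuotientGroup.mk g.1, fun a => (smul_mk_eq_mk_iff_conj_mem H _ _).2 (g.2 a)⟩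
  let conjClass (g : S) : Quot (hConjRel H α) :=
    Quot.mk _ ⟨conjCodRestrict H α g g.2, g, fun _ => rfl⟩
  have orbit_surjective : orbit.Surjective := by
    rintro ⟨⟨x, hx⟩⟩
    obtain ⟨g, rfl⟩ := QuotientGroup.mk_surjective x
    exact ⟨⟨g, fun a => (smul_mk_eq_mk_iff_conj_mem H _ _).1 (hx a)⟩, rfl⟩
  have conjClass_surjective : conjClass.Surjective := by
    rintro ⟨⟨β, g, hβ⟩⟩
    have hg : ∀ a, g⁻¹ * α a * g ∈ H := fun a => hβ a ▸ (β a).2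
    obtain rfl := eq_conjCodRestrict H α hg β hβ
    exact ⟨⟨g, hg⟩, rfl⟩
  have fibers_eq : ∀ g g' : S, orbit g = orbit g' ↔ conjClass g = conjClass g' := fun g g' => by
    rw [Quot.eq, Quot.eq, (centralizerOrbitRel_equivalence H α).eqvGen_iff,
      (hConjRel_equivalence H α).eqvGen_iff, centralizerOrbitRel_mk_iff,
      hConjRel_conjCodRestrict_iff]
  obtain ⟨e, he⟩ :=
    exists_equiv_apply_eq_of_surjective_of_fibers_eq orbit_surjective conjClass_surjective fibers_eq
  refine ⟨e, fun g hg β hβ => ?_⟩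
  have hg' : ∀ a, g⁻¹ * α a * g ∈ H := fun a => (smul_mk_eq_mk_iff_conj_mem H _ _).1 (hg a)
  obtain rfl := eq_conjCodRestrict H α hg' β hβ
  exact he ⟨g, hg'⟩

end
end

section
/- Let G be a group, H ≤ G, α : A → G a homomorphism, and gH ∈ (G/H)^{im α} a coset fixed by im α. Then the stabilizer of gH under the action of C_G(im α) on (G/H)^{im α} equals g·C_H(im(g⁻¹αg))·g⁻¹. -/
/-! Conjugation by `g` translates both conditions on `c` into conditions on `x = g⁻¹ c g`:
`c` fixes `gH` iff `x ∈ H`, and `c` centralizes `im α` iff `x` centralizes `im (g⁻¹ α g)`. -/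

theorem QuotientGroup.smul_mk_eq_mk_iff {G : Type*} [Group G] (H : Subgroup G) (c g : G) :
    c • (g : G ⧸ H) = g ↔ g⁻¹ * c * g ∈ H := by
  rw [MulAction.Quotient.smul_mk, QuotientGroup.eq, ← H.inv_mem_iff, smul_eq_mul]
  simp only [mul_inv_rev, inv_inv, mul_assoc]

theorem Subgroup.mem_centralizer_range_iff_commute_conj {G ι : Type*} [Group G] (f : ι → G)
    (c g : G) :
    c ∈ centralizer (Set.range f) ↔ ∀ i, Commute (g⁻¹ * c * g) (g⁻¹ * f i * g) := by
  simp only [mem_centralizer_iff, Set.forall_mem_range]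
  refine forall_congr' fun i => ?_
  have hconj := Commute.conj_iff (a := c) (b := f i) g⁻¹
  rw [inv_inv] at hconj
  rw [hconj, Commute.symm_iff]
  rfl

theorem stabilizer_of_fixed_coset_eq_conj_centralizer_general {G A : Type*} [Group G] [Group A]
    (H : Subgroup G) (α : A →* G) (g : G) :
    ∀ c : G,
      (c ∈ Subgroup.centralizer (Set.range α) ∧
        c • (QuotientGroup.mk g : G ⧸ H) = QuotientGroup.mk g) ↔
      ∃ x : G, x ∈ H ∧ (∀ a : A, x * (g⁻¹ * α a * g) = (g⁻¹ * α a * g) * x) ∧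
        c = g * x * g⁻¹ := by
  intro c
  rw [Subgroup.mem_centralizer_range_iff_commute_conj α c g, QuotientGroup.smul_mk_eq_mk_iff]
  constructor
  · rintro ⟨hcomm, hH⟩
    exact ⟨g⁻¹ * c * g, hH, fun a => (hcomm a).eq, by group⟩
  · rintro ⟨x, hx, hcomm, rfl⟩
    have hconj : g⁻¹ * (g * x * g⁻¹) * g = x := by group
    rw [hconj]
    exact ⟨hcomm, hx⟩

theorem stabilizer_of_fixed_coset_eq_conj_centralizer {G A : Type*} [Group G] [Group A]
    (H : Subgroup G) (α : A →* G) (g : G)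
    (hfix : ∀ a : A, (α a) • (QuotientGroup.mk g : G ⧸ H) = QuotientGroup.mk g) :
    ∀ c : G,
      (c ∈ Subgroup.centralizer (Set.range α) ∧
        c • (QuotientGroup.mk g : G ⧸ H) = QuotientGroup.mk g) ↔
      ∃ x : G, x ∈ H ∧ (∀ a : A, x * (g⁻¹ * α a * g) = (g⁻¹ * α a * g) * x) ∧
        c = g * x * g⁻¹ :=
  stabilizer_of_fixed_coset_eq_conj_centralizer_general H α g
end
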